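/- arXiv:2203.01067 — 2 statements merged into one kernel-verified Lean document; each statement's English description precedes it below -/
import Mathlib

section
/- Let R be a ring, N a chain complex of left R-modules and (M_n)_{n∈ℤ} a family of left R-modules. Then N ∈ Pr⁻¹_C(⊕_{n∈ℤ} M̄_n[n]) if and only if N_{n+1} ∈ Pr⁻¹_Mod(M_n) for every n ∈ ℤ. -/
open CategoryTheory CategoryTheory.Limits ZeroObject

universe u

/-- The category `C(R)` of `ℤ`-indexed chain complexes of left `R`-modules. -/
abbrev Cx (R : Type u) [Ring R] := ChainComplex (ModuleCat.{u} R) ℤ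

variable {R : Type u} [Ring R]

/-- A morphism factors through a projective object. -/
def FactorsThroughProjective {C : Type*} [Category C] {X Y : C} (f : X ⟶ Y) : Prop :=
  ∃ (P : C) (g : X ⟶ P) (h : P ⟶ Y), Projective P ∧ g ≫ h = f

/-- `N` belongs to the subprojectivity domain of `M`, i.e. every morphism `M ⟶ N`
factors through a projective object. -/
def InSubprojDomain {C : Type*} [Category C] (M N : C) : Prop :=
  ∀ f : M ⟶ N, FactorsThroughProjective f

/-- A morphism factors through a module belonging to the class `𝓛`. -/
def FactorsThroughClass (𝓛 : Set (ModuleCat.{u} R)) {A B : ModuleCat.{u} R} (f : A ⟶ B) : Prop :=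
  ∃ L ∈ 𝓛, ∃ (g : A ⟶ L) (h : L ⟶ B), g ≫ h = f

/-- The `n`-th cycles module `Z_n(X) = ker (d_n : X_n ⟶ X_{n-1})` of a complex. -/
def cyclesAt (X : Cx R) (n : ℤ) : ModuleCat.{u} R :=
  ModuleCat.of R (LinearMap.ker (X.d n (n - 1)).hom)

/-- A complex is exact if it has zero homology in every degree. -/
def IsExactCx (X : Cx R) : Prop := ∀ n : ℤ, X.ExactAt n

/-- A complex is bounded above if `X_n = 0` for all `n` at least some bound. -/
def BoundedAbove (X : Cx R) : Prop := ∃ b : ℤ, ∀ n, b ≤ n → IsZero (X.X n)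

/-- A complex is bounded below if `X_n = 0` for all `n` at most some bound. -/
def BoundedBelow (X : Cx R) : Prop := ∃ b : ℤ, ∀ n, n ≤ b → IsZero (X.X n)

/-- A complex is bounded if `X_n = 0` outside finitely many degrees. -/
def BoundedCx (X : Cx R) : Prop := BoundedAbove X ∧ BoundedBelow X

/-- A chain map `f : M ⟶ N` is null-homotopic: there are maps `s_n : M_n ⟶ N_{n+1}`
with `f_n = d^N_{n+1} ∘ s_n + s_{n-1} ∘ d^M_n` for all `n`. -/
def NullHomotopic {M N : Cx R} (f : M ⟶ N) : Prop :=
  ∃ s : ∀ i j : ℤ, M.X i ⟶ N.X j,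
    ∀ n : ℤ, f.f n = s n (n + 1) ≫ N.d (n + 1) n + M.d n (n - 1) ≫ s (n - 1) n

/-- The complex `M̄[n]`, with `M` in degrees `n+1` and `n`, identity differential
between them, and `0` elsewhere. -/
noncomputable def doubleCx (M : ModuleCat.{u} R) (n : ℤ) : Cx R where
  X i := if i = n + 1 ∨ i = n then M else 0
  d i j :=
    if h : i = n + 1 ∧ j = n then
      eqToHom (if_pos (Or.inl h.1)) ≫ eqToHom (if_pos (Or.inr h.2)).symm
    else 0
  shape i j hij := by
    rw [dif_neg]
    rintro ⟨rfl, rfl⟩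
    exact hij (by simp)
  d_comp_d' i j k _ _ := by
    by_cases h1 : i = n + 1 ∧ j = n
    · rw [dif_neg (show ¬(j = n + 1 ∧ k = n) by omega), comp_zero]
    · rw [dif_neg h1, zero_comp]

/-- The shifted complex `X[k]`, with `X[k]_i = X_{i-k}` and differential `(-1)^k d`. -/
noncomputable def shiftCx (X : Cx R) (k : ℤ) : Cx R where
  X i := X.X (i - k)
  d i j := (Int.negOnePow k) • X.d (i - k) (j - k)
  shape i j hij := by
    rw [X.shape (i - k) (j - k)
      (by simp only [ComplexShape.down_Rel] at hij ⊢; omega), smul_zero]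
  d_comp_d' i j l _ _ := by
    simp only [Linear.comp_units_smul, Linear.units_smul_comp,
      HomologicalComplex.d_comp_d, smul_zero]

/-- The class `#𝓛` of complexes all of whose components lie in `𝓛`. -/
def hashClass (𝓛 : Set (ModuleCat.{u} R)) : Set (Cx R) := {X | ∀ n : ℤ, X.X n ∈ 𝓛}

/-- The class `𝓛̃` of exact complexes with all cycles in `𝓛`. -/
def tildeClass (𝓛 : Set (ModuleCat.{u} R)) : Set (Cx R) :=
  {X | IsExactCx X ∧ ∀ n : ℤ, cyclesAt X n ∈ 𝓛}

/-- `F` is a flat module: every short exact sequence ending in `F` is pure, i.e.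
every morphism from a finitely presented module to `F` lifts along any surjection onto `F`. -/
def IsFlatMod (F : ModuleCat.{u} R) : Prop :=
  ∀ (B : ModuleCat.{u} R) (g : B ⟶ F), Function.Surjective g →
    ∀ (P : ModuleCat.{u} R), Module.FinitePresentation R P →
      ∀ f : P ⟶ F, ∃ h : P ⟶ B, h ≫ g = f


section Stmt3Aux

variable {R : Type u} [Ring R]

lemma dblX (M : ModuleCat.{u} R) (n i : ℤ) (h : i = n + 1 ∨ i = n) :
    (doubleCx M n).X i = M := if_pos h

lemma dblZero (M : ModuleCat.{u} R) (n i : ℤ) (h : ¬(i = n + 1 ∨ i = n)) :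
    IsZero ((doubleCx M n).X i) := by
  have hX : (doubleCx M n).X i = 0 := if_neg h
  rw [hX]
  exact isZero_zero _

lemma dbl_d (M : ModuleCat.{u} R) (n : ℤ) :
    (doubleCx M n).d (n + 1) n =
      eqToHom (dblX M n (n + 1) (Or.inl rfl)) ≫ eqToHom (dblX M n n (Or.inr rfl)).symm := by
  exact dif_pos ⟨rfl, rfl⟩

lemma dbl_d_zero (M : ModuleCat.{u} R) (n i j : ℤ) (h : ¬(i = n + 1 ∧ j = n)) :
    (doubleCx M n).d i j = 0 := by
  exact dif_neg h

/-- The chain map `doubleCx M n ⟶ N` induced by `g : M ⟶ N.X (n+1)`. -/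
noncomputable def mkHom (M : ModuleCat.{u} R) (n : ℤ) (N : Cx R) (g : M ⟶ N.X (n + 1)) :
    doubleCx M n ⟶ N where
  f i :=
    if h1 : i = n + 1 then
      eqToHom (dblX M n i (Or.inl h1)) ≫ g ≫ eqToHom (by rw [h1])
    else if h2 : i = n then
      eqToHom (dblX M n i (Or.inr h2)) ≫ g ≫ N.d (n + 1) n ≫ eqToHom (by rw [h2])
    else 0
  comm' i j hij := by
    simp only [ComplexShape.down_Rel] at hij
    subst hij
    by_cases h2 : j = n
    · obtain rfl : n = j := h2.symm
      rw [dif_pos rfl, dif_neg (show ¬(n : ℤ) = n + 1 by omega), dif_pos rfl, dbl_d M n]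
      simp
    · by_cases h3 : j + 1 = n
      · obtain rfl : n = j + 1 := h3.symm
        rw [dif_neg (by omega), dif_pos rfl, dbl_d_zero M (j + 1) (j + 1) j (by omega)]
        simp
      · rw [dif_neg (by omega), dif_neg (by omega), dbl_d_zero M n (j + 1) j (by omega)]
        simp

@[simp] lemma mkHom_f_succ (M : ModuleCat.{u} R) (n : ℤ) (N : Cx R) (g : M ⟶ N.X (n + 1)) :
    (mkHom M n N g).f (n + 1) = eqToHom (dblX M n (n + 1) (Or.inl rfl)) ≫ g := by
  simp [mkHom]

lemma dbl_hom_ext {M : ModuleCat.{u} R} {n : ℤ} {N : Cx R} (h h' : doubleCx M n ⟶ N)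
    (e : h.f (n + 1) = h'.f (n + 1)) : h = h' := by
  apply HomologicalComplex.hom_ext
  intro i
  by_cases h1 : i = n + 1
  · subst h1; exact e
  by_cases h2 : i = n
  · obtain rfl : n = i := h2.symm
    have hc := h.comm' (n + 1) n (by simp)
    have hc' := h'.comm' (n + 1) n (by simp)
    rw [dbl_d M n] at hc hc'
    have key : (eqToHom (dblX M n (n + 1) (Or.inl rfl)) ≫ eqToHom (dblX M n n (Or.inr rfl)).symm) ≫
        h.f n = (eqToHom (dblX M n (n + 1) (Or.inl rfl)) ≫ eqToHom (dblX M n n (Or.inr rfl)).symm) ≫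
        h'.f n := by rw [← hc, ← hc', e]
    exact (cancel_epi _).mp key
  · exact (dblZero M n i (by omega)).eq_of_src _ _

/-- The chain map `N ⟶ doubleCx M n` induced by `g : N.X n ⟶ M`. -/
noncomputable def coMkHom (N : Cx R) (M : ModuleCat.{u} R) (n : ℤ) (g : N.X n ⟶ M) :
    N ⟶ doubleCx M n where
  f i :=
    if h1 : i = n + 1 then
      eqToHom (by rw [h1]) ≫ N.d (n + 1) n ≫ g ≫ eqToHom (dblX M n i (Or.inl h1)).symm
    else if h2 : i = n then
      eqToHom (by rw [h2]) ≫ g ≫ eqToHom (dblX M n i (Or.inr h2)).symm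
    else 0
  comm' i j hij := by
    simp only [ComplexShape.down_Rel] at hij
    subst hij
    by_cases h2 : j = n
    · obtain rfl : n = j := h2.symm
      rw [dif_pos rfl, dif_neg (show ¬(n : ℤ) = n + 1 by omega), dif_pos rfl, dbl_d M n]
      simp
    · by_cases h3 : j = n + 1
      · obtain rfl : j = n + 1 := h3
        simp only [dif_neg (show ¬(n + 1 + 1 : ℤ) = n + 1 by omega),
          dif_neg (show ¬(n + 1 + 1 : ℤ) = n by omega), dif_pos rfl,
          dbl_d_zero M n (n + 1 + 1) (n + 1) (by omega)]
        simp
      · rw [dbl_d_zero M n (j + 1) j (by omega)]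
        simp only [dif_neg h3, dif_neg h2]
        simp

@[simp] lemma coMkHom_f_self (N : Cx R) (M : ModuleCat.{u} R) (n : ℤ) (g : N.X n ⟶ M) :
    (coMkHom N M n g).f n = g ≫ eqToHom (dblX M n n (Or.inr rfl)).symm := by
  simp [coMkHom, show ¬(n : ℤ) = n + 1 by omega]

/-- Functoriality of the double complex. -/
noncomputable def dblMap {A B : ModuleCat.{u} R} (φ : A ⟶ B) (n : ℤ) :
    doubleCx A n ⟶ doubleCx B n :=
  mkHom A n (doubleCx B n) (φ ≫ eqToHom (dblX B n (n + 1) (Or.inl rfl)).symm)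

lemma dblMap_f_succ {A B : ModuleCat.{u} R} (φ : A ⟶ B) (n : ℤ) :
    (dblMap φ n).f (n + 1) = eqToHom (dblX A n (n + 1) (Or.inl rfl)) ≫ φ ≫
      eqToHom (dblX B n (n + 1) (Or.inl rfl)).symm := by
  simp [dblMap]

lemma dblMap_f_self {A B : ModuleCat.{u} R} (φ : A ⟶ B) (n : ℤ) :
    (dblMap φ n).f n = eqToHom (dblX A n n (Or.inr rfl)) ≫ φ ≫
      eqToHom (dblX B n n (Or.inr rfl)).symm := by
  rw [dblMap, mkHom]
  dsimp only
  rw [dif_neg (show ¬(n : ℤ) = n + 1 by omega), dif_pos rfl, dbl_d B n]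
  simp

lemma dblMap_f_epi {A B : ModuleCat.{u} R} (φ : A ⟶ B) (hφ : Epi φ) (n i : ℤ) :
    Epi ((dblMap φ n).f i) := by
  by_cases h1 : i = n + 1
  · obtain rfl : i = n + 1 := h1
    rw [dblMap_f_succ]
    infer_instance
  by_cases h2 : i = n
  · obtain rfl : i = n := h2
    rw [dblMap_f_self]
    infer_instance
  · constructor
    intro Z u v _
    exact (dblZero B n i (by omega)).eq_of_src u v

lemma projective_component (Q : Cx R) (hQ : Projective Q) (k : ℤ) :
    Projective (Q.X k) := by
  constructor
  intro E X f e he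
  haveI := hQ
  haveI : Epi (dblMap e k) :=
    HomologicalComplex.epi_of_epi_f _ (fun i => dblMap_f_epi e he k i)
  obtain ⟨L, hL⟩ := Projective.factors (coMkHom Q X k f) (dblMap e k)
  refine ⟨L.f k ≫ eqToHom (dblX E k k (Or.inr rfl)), ?_⟩
  have hLk := HomologicalComplex.congr_hom hL k
  rw [HomologicalComplex.comp_f, coMkHom_f_self, dblMap_f_self] at hLk
  have key := congrArg (fun t => t ≫ eqToHom (dblX X k k (Or.inr rfl))) hLk
  simpa using key

lemma projective_dbl (P : ModuleCat.{u} R) (n : ℤ) (hP : Projective P) :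
    Projective (doubleCx P n) := by
  constructor
  intro E X f e he
  haveI := hP
  obtain ⟨l, hl⟩ := Projective.factors
    (eqToHom (dblX P n (n + 1) (Or.inl rfl)).symm ≫ f.f (n + 1)) (e.f (n + 1))
  refine ⟨mkHom P n E l, ?_⟩
  apply dbl_hom_ext
  rw [HomologicalComplex.comp_f, mkHom_f_succ, Category.assoc, hl]
  simp

lemma projective_sigma {β : Type} (g : β → Cx R) [HasCoproduct g]
    (hp : ∀ b, Projective (g b)) : Projective (∐ g) := by
  constructor
  intro E X f e he
  haveI := fun b => hp b
  refine ⟨Sigma.desc fun b => Projective.factorThru (Sigma.ι g b ≫ f) e, ?_⟩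
  ext b
  simp

end Stmt3Aux

/-- Proposition 2.4: subprojectivity domain of a contractible complex. -/
theorem stmt3 (R : Type u) [Ring R] (N : Cx R) (M : ℤ → ModuleCat.{u} R) :
    InSubprojDomain (∐ fun n : ℤ => doubleCx (M n) n) N ↔
      ∀ n : ℤ, InSubprojDomain (M n) (N.X (n + 1)) := by
  constructor
  · intro hyp n g
    obtain ⟨Q, a, b, hQ, hab⟩ := hyp (Sigma.desc fun m =>
      if h : m = n then eqToHom (by rw [h]) ≫ mkHom (M n) n N g else 0)
    have hι : Sigma.ι (fun m => doubleCx (M m) m) n ≫ a ≫ b = mkHom (M n) n N g := by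
      rw [hab, Sigma.ι_desc, dif_pos rfl, eqToHom_refl, Category.id_comp]
    have hc := HomologicalComplex.congr_hom hι (n + 1)
    simp only [HomologicalComplex.comp_f, Category.assoc, mkHom_f_succ] at hc
    refine ⟨Q.X (n + 1), eqToHom (dblX (M n) n (n + 1) (Or.inl rfl)).symm ≫
        (Sigma.ι (fun m => doubleCx (M m) m) n).f (n + 1) ≫ a.f (n + 1), b.f (n + 1),
      projective_component Q hQ (n + 1), ?_⟩
    simp only [Category.assoc]
    rw [hc]
    simp
  · intro hyp f
    have hch : ∀ m : ℤ, FactorsThroughProjective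
        (eqToHom (dblX (M m) m (m + 1) (Or.inl rfl)).symm ≫
          ((Sigma.ι (fun k => doubleCx (M k) k) m ≫ f).f (m + 1))) := fun m => hyp m _
    choose P α β hP hαβ using hch
    refine ⟨∐ fun m => doubleCx (P m) m,
      Sigma.desc fun m => mkHom (M m) m (doubleCx (P m) m)
        (α m ≫ eqToHom (dblX (P m) m (m + 1) (Or.inl rfl)).symm) ≫
        Sigma.ι (fun m => doubleCx (P m) m) m,
      Sigma.desc fun m => mkHom (P m) m N (β m),
      projective_sigma _ (fun m => projective_dbl (P m) m (hP m)), ?_⟩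
    apply Sigma.hom_ext
    intro m
    rw [← Category.assoc, Sigma.ι_desc, Category.assoc, Sigma.ι_desc]
    apply dbl_hom_ext
    simp only [HomologicalComplex.comp_f, mkHom_f_succ, Category.assoc, eqToHom_trans_assoc,
      eqToHom_refl, Category.id_comp]
    rw [hαβ m]
    simp [HomologicalComplex.comp_f]
end

section
/- Let R be a ring, 𝓛 a class of left R-modules, M a bounded below chain complex of left R-modules, and N an exact complex that is Hom_R(𝓛,−)-exact. If for every n ∈ ℤ every R-linear map M_n → Z_n(N) factors through some module in 𝓛, then every chain map f : M → N is null-homotopic via a homotopy (s_n : M_n → N_{n+1})_{n∈ℤ} satisfying f_n = d^N_{n+1} ∘ s_n + s_{n-1} ∘ d^M_n for all n, in which each s_n factors through some module belonging to 𝓛. -/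
open CategoryTheory CategoryTheory.Limits ZeroObject

universe u

variable {R : Type u} [Ring R]

lemma d_eqToHom' (X : Cx R) {i i' j j' : ℤ} (hi : i = i') (hj : j = j') :
    X.d i j ≫ eqToHom (congrArg X.X hj) = eqToHom (congrArg X.X hi) ≫ X.d i' j' := by
  subst hi hj; simp

lemma f_eqToHom' {M N : Cx R} (f : M ⟶ N) {i i' : ℤ} (hi : i = i') :
    f.f i ≫ eqToHom (congrArg N.X hi) = eqToHom (congrArg M.X hi) ≫ f.f i' := by
  subst hi; simp

lemma stepEx (𝓛 : Set (ModuleCat.{u} R)) (M N : Cx R) (f : M ⟶ N)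
    (hNhom : ∀ L ∈ 𝓛, ∀ n : ℤ, ∀ φ : L ⟶ N.X n, φ ≫ N.d n (n - 1) = 0 →
      ∃ g : L ⟶ N.X (n + 1), g ≫ N.d (n + 1) n = φ)
    (hfac : ∀ n : ℤ, ∀ φ : M.X n ⟶ cyclesAt N n, FactorsThroughClass 𝓛 φ)
    (n : ℤ) (t : M.X n ⟶ N.X (n+1))
    (h : M.d (n+1) n ≫ (f.f n - t ≫ N.d (n+1) n) = 0) :
    ∃ u : M.X (n+1) ⟶ N.X (n+1+1),
      u ≫ N.d (n+1+1) (n+1) = f.f (n+1) - M.d (n+1) n ≫ t ∧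
      FactorsThroughClass 𝓛 u := by
  set g : M.X (n+1) ⟶ N.X (n+1) := f.f (n+1) - M.d (n+1) n ≫ t with hg
  have hgd : g ≫ N.d (n+1) n = 0 := by
    rw [hg, Preadditive.sub_comp, f.comm (n+1) n, Category.assoc,
      ← Preadditive.comp_sub]
    exact h
  have hgd' : g ≫ N.d (n+1) (n+1-1) = 0 := by
    have e := d_eqToHom' N (rfl : n+1 = n+1) (show n = n+1-1 by omega)
    rw [eqToHom_refl, Category.id_comp] at e
    rw [← e, ← Category.assoc, hgd, zero_comp]
  set g' : M.X (n+1) ⟶ cyclesAt N (n+1) :=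
    ModuleCat.ofHom (LinearMap.codRestrict (LinearMap.ker (N.d (n+1) (n+1-1)).hom) g.hom
      (fun x => by
        rw [LinearMap.mem_ker]
        exact congrArg (fun φ => φ.hom x) hgd')) with hg'
  obtain ⟨L, hL, p, q, hpq⟩ := hfac (n+1) g'
  have hq : (q ≫ (ModuleCat.ofHom (LinearMap.ker (N.d (n+1) (n+1-1)).hom).subtype :
      cyclesAt N (n+1) ⟶ N.X (n+1))) ≫ N.d (n+1) (n+1-1) = 0 := by
    ext x
    exact (q.hom x).2
  obtain ⟨w, hw⟩ := hNhom L hL (n+1) _ hq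
  refine ⟨p ≫ w, ?_, L, hL, p, w, rfl⟩
  rw [Category.assoc, hw]
  exact (Category.assoc _ _ _).symm.trans ((congrArg (fun φ => φ ≫
    (ModuleCat.ofHom (LinearMap.ker (N.d (n+1) (n+1-1)).hom).subtype :
      cyclesAt N (n+1) ⟶ N.X (n+1))) hpq).trans rfl)

section Rec
variable (𝓛 : Set (ModuleCat.{u} R)) (M N : Cx R) (f : M ⟶ N)
variable (hNhom : ∀ L ∈ 𝓛, ∀ n : ℤ, ∀ φ : L ⟶ N.X n, φ ≫ N.d n (n - 1) = 0 →
      ∃ g : L ⟶ N.X (n + 1), g ≫ N.d (n + 1) n = φ)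
variable (hfac : ∀ n : ℤ, ∀ φ : M.X n ⟶ cyclesAt N n, FactorsThroughClass 𝓛 φ)

open Classical in
noncomputable def st (n : ℤ) (t : M.X n ⟶ N.X (n+1)) : M.X (n+1) ⟶ N.X (n+1+1) :=
  if h : M.d (n+1) n ≫ (f.f n - t ≫ N.d (n+1) n) = 0 then
    (stepEx 𝓛 M N f hNhom hfac n t h).choose
  else 0

lemma st_spec (n : ℤ) (t : M.X n ⟶ N.X (n+1))
    (h : M.d (n+1) n ≫ (f.f n - t ≫ N.d (n+1) n) = 0) :
    (st 𝓛 M N f hNhom hfac n t) ≫ N.d (n+1+1) (n+1) = f.f (n+1) - M.d (n+1) n ≫ t ∧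
    FactorsThroughClass 𝓛 (st 𝓛 M N f hNhom hfac n t) := by
  rw [st]
  rw [dif_pos h]
  exact (stepEx 𝓛 M N f hNhom hfac n t h).choose_spec

noncomputable def auxS (b : ℤ) : ℕ → ∀ n : ℤ, (M.X n ⟶ N.X (n+1))
  | 0 => fun _ => 0
  | (k+1) => fun n =>
    if b < n then
      eqToHom (congrArg M.X (show n = n - 1 + 1 by omega)) ≫
        st 𝓛 M N f hNhom hfac (n-1) (auxS b k (n-1)) ≫
        eqToHom (congrArg N.X (show n - 1 + 1 + 1 = n + 1 by omega))
    else 0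

lemma auxS_stable (b : ℤ) : ∀ k : ℕ, ∀ n : ℤ, (n - b).toNat ≤ k →
    auxS 𝓛 M N f hNhom hfac b k n = auxS 𝓛 M N f hNhom hfac b (n - b).toNat n := by
  intro k
  induction k with
  | zero => intro n hn; rw [Nat.le_zero.mp hn]
  | succ k ih =>
    intro n hn
    by_cases hb : b < n
    · have h1 : (n - b).toNat = (n - 1 - b).toNat + 1 := by omega
      have h2 : (n - 1 - b).toNat ≤ k := by omega
      rw [h1]
      show _ = auxS 𝓛 M N f hNhom hfac b ((n-1-b).toNat + 1) n
      simp only [auxS, if_pos hb]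
      rw [ih (n-1) h2]
    · have h1 : (n - b).toNat = 0 := by omega
      rw [h1]
      simp only [auxS, if_neg hb]

/-- the homotopy family -/
noncomputable def sig (b : ℤ) (n : ℤ) : M.X n ⟶ N.X (n+1) :=
  auxS 𝓛 M N f hNhom hfac b (n - b).toNat n

lemma sig_le (b : ℤ) (n : ℤ) (hn : n ≤ b) : sig 𝓛 M N f hNhom hfac b n = 0 := by
  rw [sig, show (n - b).toNat = 0 by omega]
  rfl

lemma sig_succ (b : ℤ) (n : ℤ) (hn : b < n) :
    sig 𝓛 M N f hNhom hfac b n =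
      eqToHom (congrArg M.X (show n = n - 1 + 1 by omega)) ≫
        st 𝓛 M N f hNhom hfac (n-1) (sig 𝓛 M N f hNhom hfac b (n-1)) ≫
        eqToHom (congrArg N.X (show n - 1 + 1 + 1 = n + 1 by omega)) := by
  rw [sig, show (n - b).toNat = (n - 1 - b).toNat + 1 by omega]
  show auxS 𝓛 M N f hNhom hfac b ((n-1-b).toNat + 1) n = _
  simp only [auxS, if_pos hn]
  rfl
end Rec

section Inv
variable (𝓛 : Set (ModuleCat.{u} R)) (M N : Cx R) (f : M ⟶ N)
variable (hNhom : ∀ L ∈ 𝓛, ∀ n : ℤ, ∀ φ : L ⟶ N.X n, φ ≫ N.d n (n - 1) = 0 →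
      ∃ g : L ⟶ N.X (n + 1), g ≫ N.d (n + 1) n = φ)
variable (hfac : ∀ n : ℤ, ∀ φ : M.X n ⟶ cyclesAt N n, FactorsThroughClass 𝓛 φ)

lemma invariant (b : ℤ) (hb : ∀ n, n ≤ b → IsZero (M.X n)) :
    ∀ k : ℕ, ∀ n : ℤ, n - b ≤ (k : ℤ) →
      (f.f n = sig 𝓛 M N f hNhom hfac b n ≫ N.d (n+1) n +
        M.d n (n-1) ≫ (sig 𝓛 M N f hNhom hfac b (n-1) ≫
          eqToHom (congrArg N.X (show n - 1 + 1 = n by omega))) ) ∧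
      FactorsThroughClass 𝓛 (sig 𝓛 M N f hNhom hfac b n) := by
  intro k
  induction k with
  | zero =>
    intro n hn
    have hn' : n ≤ b := by omega
    constructor
    · rw [sig_le 𝓛 M N f hNhom hfac b n hn', sig_le 𝓛 M N f hNhom hfac b (n-1) (by omega),
        (hb n hn').eq_zero_of_src (f.f n)]
      simp
    · obtain ⟨L, hL, -, -, -⟩ := hfac n 0
      exact ⟨L, hL, 0, 0, by rw [sig_le 𝓛 M N f hNhom hfac b n hn']; simp⟩
  | succ k ih =>
    intro n hn
    by_cases hk : n - b ≤ (k : ℤ)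
    · exact ih n hk
    · have hbn : b < n := by omega
      obtain ⟨ihEq, -⟩ := ih (n-1) (by omega)
      -- the condition needed for the step
      have hc : M.d (n-1+1) (n-1) ≫
          (f.f (n-1) - sig 𝓛 M N f hNhom hfac b (n-1) ≫ N.d (n-1+1) (n-1)) = 0 := by
        rw [ihEq, add_sub_cancel_left, ← Category.assoc, HomologicalComplex.d_comp_d,
          zero_comp]
      obtain ⟨hst1, hst2⟩ := st_spec 𝓛 M N f hNhom hfac (n-1)
        (sig 𝓛 M N f hNhom hfac b (n-1)) hc
      have hsig := sig_succ 𝓛 M N f hNhom hfac b n hbn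
      set e1 : M.X n ⟶ M.X (n-1+1) :=
        eqToHom (congrArg M.X (show n = n - 1 + 1 by omega)) with he1
      set e2 : N.X (n-1+1+1) ⟶ N.X (n+1) :=
        eqToHom (congrArg N.X (show n - 1 + 1 + 1 = n + 1 by omega)) with he2
      set eN : N.X (n-1+1) ⟶ N.X n :=
        eqToHom (congrArg N.X (show n - 1 + 1 = n by omega)) with heN
      have key : sig 𝓛 M N f hNhom hfac b n ≫ N.d (n+1) n =
          f.f n - M.d n (n-1) ≫ (sig 𝓛 M N f hNhom hfac b (n-1) ≫ eN) := by
        rw [hsig]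
        calc (e1 ≫ st 𝓛 M N f hNhom hfac (n-1) (sig 𝓛 M N f hNhom hfac b (n-1)) ≫ e2) ≫
              N.d (n+1) n
            = e1 ≫ st 𝓛 M N f hNhom hfac (n-1) (sig 𝓛 M N f hNhom hfac b (n-1)) ≫
              (e2 ≫ N.d (n+1) n) := by simp only [Category.assoc]
          _ = e1 ≫ (st 𝓛 M N f hNhom hfac (n-1) (sig 𝓛 M N f hNhom hfac b (n-1)) ≫
              N.d (n-1+1+1) (n-1+1)) ≫ eN := by
              rw [← d_eqToHom' N (show n-1+1+1 = n+1 by omega) (show n-1+1 = n by omega)]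
              simp only [Category.assoc]
              rw [heN]
          _ = e1 ≫ (f.f (n-1+1) - M.d (n-1+1) (n-1) ≫ sig 𝓛 M N f hNhom hfac b (n-1)) ≫
              eN := by rw [hst1]
          _ = (e1 ≫ f.f (n-1+1) ≫ eN) -
              ((e1 ≫ M.d (n-1+1) (n-1)) ≫ sig 𝓛 M N f hNhom hfac b (n-1) ≫ eN) := by
              simp only [Preadditive.sub_comp, Preadditive.comp_sub, Category.assoc]
          _ = f.f n - M.d n (n-1) ≫ (sig 𝓛 M N f hNhom hfac b (n-1) ≫ eN) := by
              rw [heN, f_eqToHom' f (show n-1+1 = n by omega), he1, ← Category.assoc,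
                eqToHom_trans, eqToHom_refl, Category.id_comp]
              congr 1
              have hd : (eqToHom (congrArg M.X (show n = n-1+1 by omega)) :
                  M.X n ⟶ M.X (n-1+1)) ≫ M.d (n-1+1) (n-1) = M.d n (n-1) := by
                rw [← d_eqToHom' M (show n = n-1+1 by omega) (rfl : n-1 = n-1)]
                simp
              rw [← hd]
      constructor
      · rw [key]; abel
      · obtain ⟨L, hL, p, w, hpw⟩ := hst2
        exact ⟨L, hL, e1 ≫ p, w ≫ e2, by
          rw [hsig, ← hpw]; simp only [Category.assoc]⟩
end Inv

/-- Lemma 2.5. -/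
theorem stmt4 (R : Type u) [Ring R] (𝓛 : Set (ModuleCat.{u} R)) (M N : Cx R)
    (hM : BoundedBelow M)
    (hN : IsExactCx N)
    (hNhom : ∀ L ∈ 𝓛, ∀ n : ℤ, ∀ f : L ⟶ N.X n, f ≫ N.d n (n - 1) = 0 →
      ∃ g : L ⟶ N.X (n + 1), g ≫ N.d (n + 1) n = f)
    (hfac : ∀ n : ℤ, ∀ f : M.X n ⟶ cyclesAt N n, FactorsThroughClass 𝓛 f) :
    ∀ f : M ⟶ N, ∃ s : ∀ i j : ℤ, M.X i ⟶ N.X j,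
      (∀ n : ℤ, f.f n = s n (n + 1) ≫ N.d (n + 1) n + M.d n (n - 1) ≫ s (n - 1) n) ∧
      (∀ n : ℤ, FactorsThroughClass 𝓛 (s n (n + 1))) := by
  intro f
  obtain ⟨b, hb⟩ := hM
  refine ⟨fun i j => if h : j = i + 1 then
      sig 𝓛 M N f hNhom hfac b i ≫ eqToHom (congrArg N.X h.symm) else 0, ?_, ?_⟩
  · intro n
    have I1 := (invariant 𝓛 M N f hNhom hfac b hb (n - b).toNat n (by omega)).1
    simp only [dif_pos (rfl : n + 1 = n + 1), dif_pos (show n = n - 1 + 1 by omega)]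
    rw [dif_pos trivial, eqToHom_refl, Category.comp_id]
    exact I1
  · intro n
    have I2 := (invariant 𝓛 M N f hNhom hfac b hb (n - b).toNat n (by omega)).2
    simp only [dif_pos (rfl : n + 1 = n + 1)]
    rw [dif_pos trivial, eqToHom_refl, Category.comp_id]
    exact I2
end
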